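/- arXiv:2205.09848 — 2 statements merged into one kernel-verified Lean document; each statement's English description precedes it below -/
import Mathlib

section
/- For the Levi-Civita connection ∇̃ of the metric g̃ on ℝ⁴, the covariant derivatives of the frame fields satisfy, at every point: ∇̃_{e₁}e₁ = 0, ∇̃_{e₁}e₂ = (1/2)e₄, ∇̃_{e₁}e₃ = 0, ∇̃_{e₁}e₄ = −(1/2)e₂, ∇̃_{e₂}e₁ = (1/2)e₄, ∇̃_{e₂}e₂ = 0, ∇̃_{e₂}e₃ = (1/2)e₄, ∇̃_{e₂}e₄ = −(1/2)(e₁ + e₃), ∇̃_{e₃}e₁ = 0, ∇̃_{e₃}e₂ = (1/2)e₄, ∇̃_{e₃}e₃ = 0, ∇̃_{e₃}e₄ = −(1/2)e₂, ∇̃_{e₄}e₁ = −(1/2)e₂, ∇̃_{e₄}e₂ = (1/2)(e₁ − e₃), ∇̃_{e₄}e₃ = (1/2)e₂, ∇̃_{e₄}e₄ = 0. -/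
noncomputable section

/-- The left-invariant frame fields e₁,e₂,e₃,e₄ on ℝ⁴ (coordinates x,y,z,t = p 0,...,p 3). -/
def eVF (i : Fin 4) (p : Fin 4 → ℝ) : Fin 4 → ℝ :=
  ![![1, 0, 0, 0],
    ![p 3, 1, 0, 0],
    ![(p 3) ^ 2 / 2, p 3, 1, 0],
    ![0, 0, 0, 1]] i

/-- The matrix of the metric g̃ at a point with last coordinate t. -/
def gMat (t : ℝ) : Matrix (Fin 4) (Fin 4) ℝ :=
  !![1, -t, t ^ 2 / 2, 0;
     -t, 1 + t ^ 2, -t * (1 + t ^ 2 / 2), 0;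
     t ^ 2 / 2, -t * (1 + t ^ 2 / 2), 1 + t ^ 2 + t ^ 4 / 4, 0;
     0, 0, 0, 1]

/-- The metric g̃ as a bilinear form on each tangent space. -/
def gMet (p X Y : Fin 4 → ℝ) : ℝ :=
  ∑ i, ∑ j, gMat (p 3) i j * X i * Y j

/-- Partial derivative in direction of the i-th coordinate. -/
def pd (i : Fin 4) (f : (Fin 4 → ℝ) → ℝ) (p : Fin 4 → ℝ) : ℝ :=
  deriv (fun s => f (Function.update p i s)) (p i)

/-- The Christoffel symbols Γᵏᵢⱼ of g̃. -/
def Chr (p : Fin 4 → ℝ) (k i j : Fin 4) : ℝ :=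
  (1 / 2) * ∑ l, (gMat (p 3))⁻¹ k l *
    (pd i (fun q => gMat (q 3) j l) p + pd j (fun q => gMat (q 3) i l) p
      - pd l (fun q => gMat (q 3) i j) p)

/-- The Levi-Civita connection of g̃ in coordinates. -/
def nabla (X Y : (Fin 4 → ℝ) → (Fin 4 → ℝ)) (p : Fin 4 → ℝ) : Fin 4 → ℝ :=
  fun k => (∑ i, X p i * pd i (fun q => Y q k) p)
    + ∑ i, ∑ j, Chr p k i j * X p i * Y p j

/-- Lie bracket of vector fields on ℝ⁴. -/
def bracket (X Y : (Fin 4 → ℝ) → (Fin 4 → ℝ)) (p : Fin 4 → ℝ) : Fin 4 → ℝ :=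
  fderiv ℝ Y p (X p) - fderiv ℝ X p (Y p)

/-- The curvature tensor R̃(X,Y)Z = ∇̃_X ∇̃_Y Z − ∇̃_Y ∇̃_X Z − ∇̃_{[X,Y]} Z. -/
def Riem (X Y Z : (Fin 4 → ℝ) → (Fin 4 → ℝ)) (p : Fin 4 → ℝ) : Fin 4 → ℝ :=
  nabla X (nabla Y Z) p - nabla Y (nabla X Z) p - nabla (bracket X Y) Z p

/-!
All coefficients depend only on `t = p 3`, so only `∂_t` survives in the coordinate formulas.
Since the last row and column of `g̃` are constant, the Christoffel symbols reduce to
`Γᵏₜⱼ = Γᵏⱼₜ = ½ (g̃⁻¹ g̃')ₖⱼ` and `Γᵗᵢⱼ = -½ g̃'ᵢⱼ`, so for `Y` depending only on `t`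
`∇̃_X Y = Xᵗ (∂ₜY + ½ g̃⁻¹g̃' Y) + ½ Yᵗ g̃⁻¹g̃' X - ½ g̃'(X, Y) ∂ₜ`.
With `g̃⁻¹ g̃'` computed explicitly, each identity becomes a polynomial identity in `t`.
-/

open scoped Matrix

theorem pd_comp_eval (f : ℝ → ℝ) (i j : Fin 4) (p : Fin 4 → ℝ) :
    pd i (fun q => f (q j)) p = if i = j then deriv f (p j) else 0 := by
  split_ifs with h
  · subst h
    simp only [pd, Function.update_self]
  · simp only [pd, Function.update_of_ne (Ne.symm h), deriv_const]

theorem inv_gMat (t : ℝ) :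
    (gMat t)⁻¹ =
      !![1 + t ^ 2 + t ^ 4 / 4, t + t ^ 3 / 2, t ^ 2 / 2, 0;
         t + t ^ 3 / 2, 1 + t ^ 2, t, 0;
         t ^ 2 / 2, t, 1, 0;
         0, 0, 0, 1] := by
  refine Matrix.inv_eq_right_inv ?_
  ext i j
  fin_cases i <;> fin_cases j <;>
    simp [gMat, Matrix.mul_apply, Fin.sum_univ_four] <;> ring

theorem inv_gMat_apply_three (t : ℝ) (k : Fin 4) :
    (gMat t)⁻¹ k 3 = if k = 3 then 1 else 0 := by
  rw [inv_gMat]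
  fin_cases k <;> simp

def gMatDeriv (t : ℝ) : Matrix (Fin 4) (Fin 4) ℝ :=
  !![0, -1, t, 0;
     -1, 2 * t, -(1 + 3 * t ^ 2 / 2), 0;
     t, -(1 + 3 * t ^ 2 / 2), 2 * t + t ^ 3, 0;
     0, 0, 0, 0]

theorem deriv_gMat_apply (i j : Fin 4) (t : ℝ) :
    deriv (fun s => gMat s i j) t = gMatDeriv t i j := by
  fin_cases i <;> fin_cases j <;>
    simp (disch := fun_prop) [gMat, gMatDeriv, deriv_fun_mul] <;> ring

theorem pd_gMat_apply (i j l : Fin 4) (p : Fin 4 → ℝ) :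
    pd i (fun q => gMat (q 3) j l) p = if i = 3 then gMatDeriv (p 3) j l else 0 := by
  rw [pd_comp_eval (fun t => gMat t j l), deriv_gMat_apply]

theorem gMatDeriv_transpose (t : ℝ) : (gMatDeriv t)ᵀ = gMatDeriv t := by
  ext i j
  fin_cases i <;> fin_cases j <;> rfl

theorem inv_gMat_mul_gMatDeriv (t : ℝ) :
    (gMat t)⁻¹ * gMatDeriv t =
      !![-t, t ^ 2 / 2 - 1, 0, 0;
         -1, 0, t ^ 2 / 2 - 1, 0;
         0, -1, t, 0;
         0, 0, 0, 0] := by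
  rw [inv_gMat]
  ext i j
  fin_cases i <;> fin_cases j <;>
    simp [gMatDeriv, Matrix.mul_apply, Fin.sum_univ_four] <;> ring

theorem Chr_eq (p : Fin 4 → ℝ) (k i j : Fin 4) :
    Chr p k i j = ((if i = 3 then ((gMat (p 3))⁻¹ * gMatDeriv (p 3)) k j else 0)
      + (if j = 3 then ((gMat (p 3))⁻¹ * gMatDeriv (p 3)) k i else 0)
      - if k = 3 then gMatDeriv (p 3) i j else 0) / 2 := by
  have hsum (a : Fin 4) :
      ∑ l, (gMat (p 3))⁻¹ k l * gMatDeriv (p 3) a l = ((gMat (p 3))⁻¹ * gMatDeriv (p 3)) k a := by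
    conv_rhs => rw [← gMatDeriv_transpose]
    rfl
  simp only [Chr, pd_gMat_apply, mul_add, mul_sub, Finset.sum_add_distrib, Finset.sum_sub_distrib,
    mul_ite, mul_zero, Finset.sum_ite_irrel, Finset.sum_const_zero, Finset.sum_ite_eq',
    Finset.mem_univ, if_true, inv_gMat_apply_three, hsum]
  split_ifs <;> ring

theorem nabla_comp_eval_apply (X : (Fin 4 → ℝ) → Fin 4 → ℝ) (F : ℝ → Fin 4 → ℝ)
    (p : Fin 4 → ℝ) (k : Fin 4) :
    nabla X (fun q => F (q 3)) p k = X p 3 * deriv (fun t => F t k) (p 3)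
      + (X p 3 * (((gMat (p 3))⁻¹ * gMatDeriv (p 3)) *ᵥ F (p 3)) k
        + F (p 3) 3 * (((gMat (p 3))⁻¹ * gMatDeriv (p 3)) *ᵥ X p) k
        - if k = 3 then X p ⬝ᵥ gMatDeriv (p 3) *ᵥ F (p 3) else 0) / 2 := by
  have hpd (i : Fin 4) :
      pd i (fun q => F (q 3) k) p = if i = 3 then deriv (fun t => F t k) (p 3) else 0 :=
    pd_comp_eval (fun t => F t k) i 3 p
  simp only [nabla, hpd, Chr_eq, mul_ite, mul_zero, Finset.sum_ite_eq', Finset.mem_univ, if_true]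
  congr 1
  simp only [add_div, sub_div, add_mul, sub_mul, Finset.sum_add_distrib, Finset.sum_sub_distrib,
    ite_div, zero_div, ite_mul, zero_mul, Finset.sum_ite_irrel, Finset.sum_const_zero,
    Finset.sum_ite_eq', Finset.mem_univ, if_true, Matrix.mulVec, dotProduct, Finset.mul_sum,
    Finset.sum_div]
  congr 1
  · congr 1 <;> exact Finset.sum_congr rfl fun _ _ => by ring
  · congr 1
    exact Finset.sum_congr rfl fun _ _ => Finset.sum_congr rfl fun _ _ => by ring

def frameMat (t : ℝ) : Matrix (Fin 4) (Fin 4) ℝ :=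
  !![1, 0, 0, 0;
     t, 1, 0, 0;
     t ^ 2 / 2, t, 1, 0;
     0, 0, 0, 1]

theorem eVF_eq_frameMat (a : Fin 4) : eVF a = fun q => frameMat (q 3) a := rfl

def frameMatDeriv (t : ℝ) : Matrix (Fin 4) (Fin 4) ℝ :=
  !![0, 0, 0, 0;
     1, 0, 0, 0;
     t, 1, 0, 0;
     0, 0, 0, 0]

theorem deriv_frameMat_apply (i j : Fin 4) (t : ℝ) :
    deriv (fun s => frameMat s i j) t = frameMatDeriv t i j := by
  fin_cases i <;> fin_cases j <;> simp [frameMat, frameMatDeriv]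

/-- The covariant derivatives of the frame fields for the Levi-Civita connection of g̃. -/
theorem nil4_connection_on_frame : ∀ p : Fin 4 → ℝ,
    nabla (eVF 0) (eVF 0) p = 0 ∧
    nabla (eVF 0) (eVF 1) p = (1 / 2 : ℝ) • eVF 3 p ∧
    nabla (eVF 0) (eVF 2) p = 0 ∧
    nabla (eVF 0) (eVF 3) p = -(1 / 2 : ℝ) • eVF 1 p ∧
    nabla (eVF 1) (eVF 0) p = (1 / 2 : ℝ) • eVF 3 p ∧
    nabla (eVF 1) (eVF 1) p = 0 ∧
    nabla (eVF 1) (eVF 2) p = (1 / 2 : ℝ) • eVF 3 p ∧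
    nabla (eVF 1) (eVF 3) p = -(1 / 2 : ℝ) • (eVF 0 p + eVF 2 p) ∧
    nabla (eVF 2) (eVF 0) p = 0 ∧
    nabla (eVF 2) (eVF 1) p = (1 / 2 : ℝ) • eVF 3 p ∧
    nabla (eVF 2) (eVF 2) p = 0 ∧
    nabla (eVF 2) (eVF 3) p = -(1 / 2 : ℝ) • eVF 1 p ∧
    nabla (eVF 3) (eVF 0) p = -(1 / 2 : ℝ) • eVF 1 p ∧
    nabla (eVF 3) (eVF 1) p = (1 / 2 : ℝ) • (eVF 0 p - eVF 2 p) ∧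
    nabla (eVF 3) (eVF 2) p = (1 / 2 : ℝ) • eVF 1 p ∧
    nabla (eVF 3) (eVF 3) p = 0 := by
  intro p
  simp only [eVF_eq_frameMat]
  refine ⟨?_, ?_, ?_, ?_, ?_, ?_, ?_, ?_, ?_, ?_, ?_, ?_, ?_, ?_, ?_, ?_⟩ <;>
  · ext k
    rw [nabla_comp_eval_apply _ (fun t => frameMat t _), deriv_frameMat_apply,
      inv_gMat_mul_gMatDeriv]
    fin_cases k <;>
      simp [frameMat, frameMatDeriv, gMatDeriv, Matrix.mulVec, dotProduct, Fin.sum_univ_four] <;>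
      ring
end
end

section
/- For all i, j ∈ {1, 2, 3}, the tangential part of ∇̃_{eᵢ} eⱼ along the hypersurface {t = t₀} vanishes: ∇̃_{eᵢ} eⱼ − g̃(∇̃_{eᵢ} eⱼ, e₄) e₄ = 0 at every point. Consequently the induced Levi-Civita connection ∇ of the hypersurface satisfies ∇_{eᵢ} eⱼ = 0, and since the components h(eᵢ,eⱼ) = g̃(∇̃_{eᵢ}eⱼ, e₄) are constant, the cubic form vanishes: (∇_{eᵢ} h)(eⱼ, eₖ) = eᵢ(h(eⱼ,eₖ)) − h(∇_{eᵢ}eⱼ, eₖ) − h(eⱼ, ∇_{eᵢ}eₖ) = 0 for all i, j, k ∈ {1,2,3}, i.e., the hypersurface is parallel. -/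
/-!
The fields e₁, e₂, e₃ are tangent to the slices `t = const` and depend on `t` only, so in
`∇̃_{eᵢ} eⱼ` the derivative terms vanish and only the Christoffel terms with spatial lower
indices remain. These equal `-½ g̃⁻¹(dₜg̃)`, and since the last column of `g̃⁻¹` is `e₄`,
`∇̃_{eᵢ} eⱼ = h_ij e₄` with `h_ij = -½ (dₜg̃)(eᵢ, eⱼ)`, which is constant (`½` for `{i,j} = {1,2}`
or `{2,3}`, `0` otherwise). So the induced connection vanishes on the frame, `h` is
constant, and every term of the cubic form is zero.
-/

noncomputable section

/-- Components of the second fundamental form of the hypersurface {t = t₀}. -/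
def sff (p : Fin 4 → ℝ) (i j : Fin 3) : ℝ :=
  gMet p (nabla (eVF i.castSucc) (eVF j.castSucc) p) (eVF 3 p)

/-- The tangential part of ∇̃_{eᵢ}eⱼ along {t = t₀}, i.e., the induced connection
∇_{eᵢ}eⱼ of the hypersurface. -/
def tanNabla (i j : Fin 3) (p : Fin 4 → ℝ) : Fin 4 → ℝ :=
  nabla (eVF i.castSucc) (eVF j.castSucc) p
    - gMet p (nabla (eVF i.castSucc) (eVF j.castSucc) p) (eVF 3 p) • eVF 3 p

/-- The pointwise bilinear extension of h to tangent vectors, using the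
orthonormal tangent frame {e₁,e₂,e₃}. -/
def sffBil (p : Fin 4 → ℝ) (V W : Fin 4 → ℝ) : ℝ :=
  ∑ j : Fin 3, ∑ k : Fin 3,
    gMet p V (eVF j.castSucc p) * gMet p W (eVF k.castSucc p) * sff p j k

open Finset Function

def gInv (t : ℝ) : Matrix (Fin 4) (Fin 4) ℝ :=
  !![1 + t ^ 2 + t ^ 4 / 4, t + t ^ 3 / 2, t ^ 2 / 2, 0;
     t + t ^ 3 / 2, 1 + t ^ 2, t, 0;
     t ^ 2 / 2, t, 1, 0;
     0, 0, 0, 1]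

lemma gMat_inv (t : ℝ) : (gMat t)⁻¹ = gInv t := by
  apply Matrix.inv_eq_right_inv
  ext i j
  fin_cases i <;> fin_cases j <;>
    simp [gMat, gInv, Matrix.mul_apply, Fin.sum_univ_four] <;> ring

lemma gInv_apply_three (t : ℝ) (k : Fin 4) : gInv t k 3 = if k = 3 then 1 else 0 := by
  fin_cases k <;> simp [gInv]

def dg (t : ℝ) : Matrix (Fin 4) (Fin 4) ℝ :=
  !![0, -1, t, 0;
     -1, 2 * t, -1 - 3 * t ^ 2 / 2, 0;
     t, -1 - 3 * t ^ 2 / 2, 2 * t + t ^ 3, 0;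
     0, 0, 0, 0]

lemma deriv_gMat (t : ℝ) (a b : Fin 4) : deriv (fun s => gMat s a b) t = dg t a b := by
  fin_cases a <;> fin_cases b <;>
    simp (disch := fun_prop) [gMat, dg, deriv_fun_add] <;> norm_num [deriv_pow_field] <;> ring

lemma pd_eq_zero_of_update_eq {i : Fin 4} {f : (Fin 4 → ℝ) → ℝ} {p : Fin 4 → ℝ}
    (h : ∀ s, f (update p i s) = f p) : pd i f p = 0 := by
  simp [pd, h]

lemma pd_comp_eval_self (i : Fin 4) (f : ℝ → ℝ) (p : Fin 4 → ℝ) :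
    pd i (fun q => f (q i)) p = deriv f (p i) := by
  simp [pd]

lemma Chr_of_ne_three {a b : Fin 4} (ha : a ≠ 3) (hb : b ≠ 3) (p : Fin 4 → ℝ) (k : Fin 4) :
    Chr p k a b = -(1 / 2) * (if k = 3 then dg (p 3) a b else 0) := by
  have hpd : ∀ {i : Fin 4}, i ≠ 3 → ∀ c d, pd i (fun q => gMat (q 3) c d) p = 0 :=
    fun hi c d => pd_eq_zero_of_update_eq fun s => by rw [update_of_ne (Ne.symm hi)]
  simp only [Chr, hpd ha, hpd hb, zero_add, zero_sub, gMat_inv]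
  rw [sum_eq_single 3 (fun l _ hl => by rw [hpd hl, neg_zero, mul_zero]) (by simp),
    pd_comp_eval_self 3 (fun t => gMat t a b), deriv_gMat, gInv_apply_three]
  split_ifs <;> ring

def gMetDeriv (p X Y : Fin 4 → ℝ) : ℝ :=
  ∑ a, ∑ b, dg (p 3) a b * X a * Y b

lemma nabla_of_tangent {X Y : (Fin 4 → ℝ) → Fin 4 → ℝ} {p : Fin 4 → ℝ}
    (hX : X p 3 = 0) (hY : Y p 3 = 0) (hYt : ∀ i ≠ 3, ∀ s, Y (update p i s) = Y p) :
    nabla X Y p = (-(1 / 2) * gMetDeriv p (X p) (Y p)) • eVF 3 p := by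
  have hder : ∀ k, ∑ i, X p i * pd i (fun q => Y q k) p = 0 := fun k =>
    sum_eq_zero fun i _ => by
      by_cases hi : i = 3
      · simp [hi, hX]
      · rw [pd_eq_zero_of_update_eq fun s => by rw [hYt i hi s], mul_zero]
  have hChr : ∀ k a b, Chr p k a b * X p a * Y p b
      = -(1 / 2) * (if k = 3 then 1 else 0) * (dg (p 3) a b * X p a * Y p b) := by
    intro k a b
    by_cases ha : a = 3
    · simp [ha, hX]
    by_cases hb : b = 3
    · simp [hb, hY]
    rw [Chr_of_ne_three ha hb]
    split_ifs <;> ring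
  funext k
  simp only [nabla, hder, hChr, ← mul_sum, zero_add, gMetDeriv]
  fin_cases k <;> simp [eVF]

lemma eVF_castSucc_apply_three (i : Fin 3) (p : Fin 4 → ℝ) : eVF i.castSucc p 3 = 0 := by
  fin_cases i <;> simp [eVF]

lemma eVF_update_of_ne (j : Fin 4) {i : Fin 4} (hi : i ≠ 3) (p : Fin 4 → ℝ) (s : ℝ) :
    eVF j (update p i s) = eVF j p := by
  simp only [eVF, update_of_ne (Ne.symm hi)]

def sffValue : Fin 3 → Fin 3 → ℝ :=
  ![![0, 1 / 2, 0], ![1 / 2, 0, 1 / 2], ![0, 1 / 2, 0]]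

lemma gMetDeriv_eVF (i j : Fin 3) (p : Fin 4 → ℝ) :
    -(1 / 2) * gMetDeriv p (eVF i.castSucc p) (eVF j.castSucc p) = sffValue i j := by
  fin_cases i <;> fin_cases j <;>
    simp [gMetDeriv, dg, eVF, sffValue, Fin.sum_univ_four] <;> ring

lemma nabla_eVF (i j : Fin 3) (p : Fin 4 → ℝ) :
    nabla (eVF i.castSucc) (eVF j.castSucc) p = sffValue i j • eVF 3 p := by
  rw [nabla_of_tangent (eVF_castSucc_apply_three i p) (eVF_castSucc_apply_three j p)
    fun k hk s => eVF_update_of_ne _ hk p s, gMetDeriv_eVF]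

lemma gMet_smul_eVF_three (p : Fin 4 → ℝ) (c : ℝ) : gMet p (c • eVF 3 p) (eVF 3 p) = c := by
  simp [gMet, gMat, eVF, Fin.sum_univ_four]

lemma sff_eq_sffValue (p : Fin 4 → ℝ) (i j : Fin 3) : sff p i j = sffValue i j := by
  rw [sff, nabla_eVF, gMet_smul_eVF_three]

lemma tanNabla_eq_zero (i j : Fin 3) (p : Fin 4 → ℝ) : tanNabla i j p = 0 := by
  rw [tanNabla, nabla_eVF, gMet_smul_eVF_three, sub_self]

lemma sffBil_zero_left (p W : Fin 4 → ℝ) : sffBil p 0 W = 0 := by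
  simp [sffBil, gMet]

lemma sffBil_zero_right (p V : Fin 4 → ℝ) : sffBil p V 0 = 0 := by
  simp [sffBil, gMet]

/-- The induced connection of the hypersurface {t = t₀} satisfies ∇_{eᵢ}eⱼ = 0,
and the cubic form (∇h)(eᵢ;eⱼ,eₖ) = eᵢ(h(eⱼ,eₖ)) − h(∇_{eᵢ}eⱼ,eₖ) − h(eⱼ,∇_{eᵢ}eₖ)
vanishes: the hypersurface is parallel. -/
theorem nil4_hypersurface_parallel :
    (∀ (p : Fin 4 → ℝ) (i j : Fin 3), tanNabla i j p = 0) ∧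
    (∀ (p : Fin 4 → ℝ) (i j k : Fin 3),
      fderiv ℝ (fun q => sff q j k) p (eVF i.castSucc p)
        - sffBil p (tanNabla i j p) (eVF k.castSucc p)
        - sffBil p (eVF j.castSucc p) (tanNabla i k p) = 0) := by
  refine ⟨fun p i j => tanNabla_eq_zero i j p, fun p i j k => ?_⟩
  have hconst : (fun q => sff q j k) = fun _ => sffValue j k :=
    funext fun q => sff_eq_sffValue q j k
  rw [hconst, fderiv_fun_const, tanNabla_eq_zero, tanNabla_eq_zero, sffBil_zero_left,
    sffBil_zero_right]
  simp
end
end
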